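/- arXiv:2310.17757 — 2 statements merged into one kernel-verified Lean document; each statement's English description precedes it below -/
import Mathlib

section
/- Let T be a finite tree and v a vertex of T. Then N_v N_T − N_v² + N_T − N_v ≥ 3(R_T − R_v). -/
/-!
Subtrees of a tree are its path-closed vertex sets. Cutting a subtree `A` along an edge `vu`
splits it into the side `A₁` of `v` and the side `A₂` of `u`; a subtree of `A` lies in `A₁`, lies
in `A₂`, or contains `vu`, and in the last case it is the union of a subtree of `A₁` rooted at `v`
and one of `A₂` rooted at `u`. Hence `N, R, N_v, R_v` of `A` are polynomials in those of `A₁`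
(at `v`) and `A₂` (at `u`), and induction on `A` shows that the inequality, together with
`N ≤ N_v²` and `3 R_v ≤ N + N_v (N_v + 1)`, survives this gluing.
-/

variable {V : Type*}

/-- A subtree of a graph: a nonempty set of vertices inducing a connected subgraph. -/
def IsSubtree (G : SimpleGraph V) (s : Finset V) : Prop :=
  s.Nonempty ∧ (G.induce (s : Set V)).Connected

open Classical in
/-- `N_T`: the number of subtrees of `G`. -/
noncomputable def numSubtrees [Fintype V] (G : SimpleGraph V) : ℕ :=
  (Finset.univ.filter fun s : Finset V => IsSubtree G s).card

open Classical in
/-- `R_T`: the sum of the orders of all subtrees of `G`. -/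
noncomputable def sumSubtrees [Fintype V] (G : SimpleGraph V) : ℕ :=
  ∑ s ∈ Finset.univ.filter (fun s : Finset V => IsSubtree G s), s.card

open Classical in
/-- `N_v`: the number of subtrees of `G` containing `v`. -/
noncomputable def numSubtreesAt [Fintype V] (G : SimpleGraph V) (v : V) : ℕ :=
  (Finset.univ.filter fun s : Finset V => IsSubtree G s ∧ v ∈ s).card

open Classical in
/-- `R_v`: the sum of the orders of all subtrees of `G` containing `v`. -/
noncomputable def sumSubtreesAt [Fintype V] (G : SimpleGraph V) (v : V) : ℕ :=
  ∑ s ∈ Finset.univ.filter (fun s : Finset V => IsSubtree G s ∧ v ∈ s), s.card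

/-- `μ_T`: the mean subtree order (global mean) of `G`. -/
noncomputable def meanSubtreeOrder [Fintype V] (G : SimpleGraph V) : ℚ :=
  (sumSubtrees G : ℚ) / (numSubtrees G : ℚ)

/-- `μ_T(v)`: the local mean of `G` at `v`. -/
noncomputable def localMean [Fintype V] (G : SimpleGraph V) (v : V) : ℚ :=
  (sumSubtreesAt G v : ℚ) / (numSubtreesAt G v : ℚ)

/-- The tree obtained by contracting the edge `uv`: the vertex `v` is merged into `u`. -/
def contractEdge (G : SimpleGraph V) (u v : V) : SimpleGraph {x : V // x ≠ v} where
  Adj a b := a ≠ b ∧ (G.Adj a.1 b.1 ∨ (a.1 = u ∧ G.Adj v b.1) ∨ (b.1 = u ∧ G.Adj v a.1))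
  symm := by
    constructor
    rintro a b ⟨hne, h⟩
    refine ⟨hne.symm, ?_⟩
    rcases h with h | h | h
    · exact Or.inl h.symm
    · exact Or.inr (Or.inr h)
    · exact Or.inr (Or.inl h)
  loopless := by constructor; rintro a ⟨hne, -⟩; exact hne rfl

namespace SimpleGraph.IsTree

variable {G : SimpleGraph V} (hT : G.IsTree)

noncomputable def segment (x y : V) : Finset V :=
  open Classical in (hT.existsUnique_path x y).exists.choose.support.toFinset

variable {hT}

theorem mem_segment_iff {x y z : V} {p : G.Walk x y} (hp : p.IsPath) :
    z ∈ hT.segment x y ↔ z ∈ p.support := by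
  classical
  rw [segment, (hT.existsUnique_path x y).unique (hT.existsUnique_path x y).exists.choose_spec hp,
    List.mem_toFinset]

theorem mem_support_of_mem_segment {x y z : V} (p : G.Walk x y) (hz : z ∈ hT.segment x y) :
    z ∈ p.support := by
  classical
  exact p.support_bypass_subset_support ((mem_segment_iff p.bypass_isPath).1 hz)

theorem left_mem_segment (x y : V) : x ∈ hT.segment x y := by
  obtain ⟨p, hp, -⟩ := hT.existsUnique_path x y
  exact (mem_segment_iff hp).2 p.start_mem_support

theorem segment_comm (x y : V) : hT.segment x y = hT.segment y x := by
  obtain ⟨p, hp, -⟩ := hT.existsUnique_path x y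
  ext z
  rw [mem_segment_iff hp, mem_segment_iff hp.reverse, Walk.support_reverse, List.mem_reverse]

theorem right_mem_segment (x y : V) : y ∈ hT.segment x y :=
  segment_comm y x ▸ left_mem_segment y x

@[simp]
theorem segment_self (x : V) : hT.segment x x = {x} := by
  ext z
  rw [mem_segment_iff (Walk.IsPath.nil (u := x))]
  simp [eq_comm]

theorem segment_subset_union [DecidableEq V] (x y z : V) :
    hT.segment x y ⊆ hT.segment x z ∪ hT.segment z y := by
  obtain ⟨p, hp, -⟩ := hT.existsUnique_path x z
  obtain ⟨q, hq, -⟩ := hT.existsUnique_path z y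
  intro w hw
  rw [Finset.mem_union, mem_segment_iff hp, mem_segment_iff hq, ← Walk.mem_support_append_iff]
  exact mem_support_of_mem_segment _ hw

theorem segment_subset_of_mem {x y z : V} (hz : z ∈ hT.segment x y) :
    hT.segment x z ⊆ hT.segment x y := by
  classical
  obtain ⟨p, hp, -⟩ := hT.existsUnique_path x y
  rw [mem_segment_iff hp] at hz
  intro w hw
  rw [mem_segment_iff (hp.takeUntil hz)] at hw
  exact (mem_segment_iff hp).2 (p.support_takeUntil_subset_support hz hw)

theorem mem_segment_iff_notMem_segment {u v : V} (hadj : G.Adj v u) (z : V) :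
    u ∈ hT.segment z v ↔ v ∉ hT.segment z u := by
  obtain ⟨p, hp, -⟩ := hT.existsUnique_path z v
  obtain ⟨q, hq, -⟩ := hT.existsUnique_path z u
  rw [mem_segment_iff hp, mem_segment_iff hq]
  exact ⟨hT.isAcyclic.ne_mem_support_of_support_of_adj_of_isPath hp hq hadj,
    hT.isAcyclic.mem_support_of_ne_mem_support_of_adj_of_isPath hp hq hadj⟩

theorem mem_segment_of_notMem_segment [DecidableEq V] {u v x y : V} (hadj : G.Adj v u)
    (hx : u ∉ hT.segment x v) (hy : v ∉ hT.segment y u) : u ∈ hT.segment x y := by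
  have hyv : u ∈ hT.segment y v := (mem_segment_iff_notMem_segment hadj y).2 hy
  rcases Finset.mem_union.1 (segment_subset_union y v x hyv) with h | h
  · rwa [segment_comm]
  · exact absurd h hx

end SimpleGraph.IsTree

section Subtree

variable {G : SimpleGraph V}

theorem SimpleGraph.IsTree.isSubtree_iff (hT : G.IsTree) {s : Finset V} :
    IsSubtree G s ↔ s.Nonempty ∧ ∀ x ∈ s, ∀ y ∈ s, hT.segment x y ⊆ s := by
  refine ⟨fun ⟨hne, hconn⟩ => ⟨hne, fun x hx y hy z hz => ?_⟩, fun ⟨hne, hclosed⟩ => ?_⟩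
  · obtain ⟨w⟩ := hconn.preconnected ⟨x, hx⟩ ⟨y, hy⟩
    have := hT.mem_support_of_mem_segment (w.map (SimpleGraph.Embedding.induce _).toHom) hz
    rw [SimpleGraph.Walk.support_map, List.mem_map] at this
    obtain ⟨⟨z', hz'⟩, -, rfl⟩ := this
    exact hz'
  · have : Nonempty (s : Set V) := hne.coe_sort
    refine ⟨hne, ⟨fun ⟨x, hx⟩ ⟨y, hy⟩ => ?_⟩⟩
    obtain ⟨p, hp, -⟩ := hT.existsUnique_path x y
    exact ⟨p.induce _ fun z hz => hclosed x hx y hy ((hT.mem_segment_iff hp).2 hz)⟩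

theorem isSubtree_singleton (v : V) : IsSubtree G {v} := by
  refine ⟨Finset.singleton_nonempty v, ?_⟩
  rw [Finset.coe_singleton]
  exact { preconnected := .of_subsingleton, nonempty := ⟨⟨v, rfl⟩⟩ }

theorem IsSubtree.inter [DecidableEq V] (hT : G.IsTree) {s t : Finset V} (hs : IsSubtree G s)
    (ht : IsSubtree G t) (hne : (s ∩ t).Nonempty) : IsSubtree G (s ∩ t) := by
  rw [hT.isSubtree_iff] at hs ht ⊢
  refine ⟨hne, fun x hx y hy => Finset.subset_inter ?_ ?_⟩
  · exact hs.2 x (Finset.mem_of_mem_inter_left hx) y (Finset.mem_of_mem_inter_left hy)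
  · exact ht.2 x (Finset.mem_of_mem_inter_right hx) y (Finset.mem_of_mem_inter_right hy)

theorem IsSubtree.union_of_adj [DecidableEq V] {s t : Finset V} {v u : V} (hs : IsSubtree G s)
    (ht : IsSubtree G t) (hv : v ∈ s) (hu : u ∈ t) (hadj : G.Adj v u) : IsSubtree G (s ∪ t) :=
  ⟨hs.1.mono Finset.subset_union_left, by
    rw [Finset.coe_union]
    exact SimpleGraph.connected_induce_union hs.2.preconnected ht.2.preconnected hv hu hadj⟩

theorem IsSubtree.exists_adj {s : Finset V} {v : V} (hs : IsSubtree G s) (hv : v ∈ s)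
    (hsv : s ≠ {v}) : ∃ u ∈ s, G.Adj v u := by
  have : Nontrivial (s : Set V) := ((Finset.nontrivial_iff_ne_singleton hv).2 hsv).coe_sort
  obtain ⟨⟨u, hu⟩, hadj⟩ := hs.2.preconnected.exists_adj_of_nontrivial ⟨v, hv⟩
  exact ⟨u, hu, hadj⟩

end Subtree

namespace SimpleGraph.IsTree

variable {G : SimpleGraph V} {hT : G.IsTree} {u v x y : V}

variable (hT) in
noncomputable def side (v u : V) (A : Finset V) : Finset V :=
  open Classical in A.filter fun z => u ∉ hT.segment z v

variable {A : Finset V}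

theorem mem_side {z : V} : z ∈ hT.side v u A ↔ z ∈ A ∧ u ∉ hT.segment z v := by
  classical
  simp [side]

theorem side_subset : hT.side v u A ⊆ A := fun _ hz => (mem_side.1 hz).1

theorem mem_side_self (hv : v ∈ A) (hvu : v ≠ u) : v ∈ hT.side v u A :=
  mem_side.2 ⟨hv, by simpa using hvu.symm⟩

theorem notMem_side : u ∉ hT.side v u A := fun h => (mem_side.1 h).2 (left_mem_segment u v)

theorem side_ssubset (hu : u ∈ A) : hT.side v u A ⊂ A :=
  Finset.ssubset_iff_of_subset side_subset |>.2 ⟨u, hu, notMem_side⟩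

theorem disjoint_side_side (hadj : G.Adj v u) : Disjoint (hT.side v u A) (hT.side u v A) :=
  Finset.disjoint_left.2 fun z h₁ h₂ =>
    (mem_side.1 h₁).2 ((mem_segment_iff_notMem_segment hadj z).2 (mem_side.1 h₂).2)

theorem mem_side_or_mem_side (hadj : G.Adj v u) {z : V} (hz : z ∈ A) :
    z ∈ hT.side v u A ∨ z ∈ hT.side u v A := by
  rw [mem_side, mem_side, ← mem_segment_iff_notMem_segment hadj]
  tauto

theorem inter_side_union_inter_side [DecidableEq V] (hadj : G.Adj v u) {s : Finset V}
    (hsA : s ⊆ A) : s ∩ hT.side v u A ∪ s ∩ hT.side u v A = s := by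
  ext z
  simp only [Finset.mem_union, Finset.mem_inter]
  exact ⟨fun h => h.elim And.left And.left,
    fun hz => (mem_side_or_mem_side hadj (hsA hz)).imp (⟨hz, ·⟩) (⟨hz, ·⟩)⟩

theorem isSubtree_side [DecidableEq V] (hA : IsSubtree G A) (hv : v ∈ A) (hvu : v ≠ u) :
    IsSubtree G (hT.side v u A) := by
  rw [hT.isSubtree_iff] at hA ⊢
  refine ⟨⟨v, mem_side_self hv hvu⟩, fun x hx y hy z hz => mem_side.2 ⟨?_, fun hu => ?_⟩⟩
  · exact hA.2 x (mem_side.1 hx).1 y (mem_side.1 hy).1 hz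
  · rw [mem_side] at hx hy
    -- `u` on the path `z → v` forces it onto `x → z ⊆ x → y ⊆ (x → v) ∪ (v → y)`.
    rcases Finset.mem_union.1 (segment_subset_union z v x hu) with h | h
    · rw [segment_comm] at h
      rcases Finset.mem_union.1 (segment_subset_union x y v (segment_subset_of_mem hz h))
        with h' | h'
      · exact hx.2 h'
      · exact hy.2 (segment_comm v y ▸ h')
    · exact hx.2 h

theorem _root_.IsSubtree.mem_of_mem_side [DecidableEq V] (hadj : G.Adj v u) {s : Finset V}
    (hs : IsSubtree G s) (hx : x ∈ s) (hx' : x ∈ hT.side v u A) (hy : y ∈ s)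
    (hy' : y ∈ hT.side u v A) : u ∈ s :=
  (hT.isSubtree_iff.1 hs).2 x hx y hy
    (mem_segment_of_notMem_segment hadj (mem_side.1 hx').2 (mem_side.1 hy').2)

theorem _root_.IsSubtree.subset_side_or [DecidableEq V] (hadj : G.Adj v u) {s : Finset V}
    (hs : IsSubtree G s) (hsA : s ⊆ A) :
    s ⊆ hT.side v u A ∨ s ⊆ hT.side u v A ∨ (v ∈ s ∧ u ∈ s) := by
  by_contra! h
  obtain ⟨x, hx, hx₁⟩ := Finset.not_subset.1 h.1
  obtain ⟨y, hy, hy₂⟩ := Finset.not_subset.1 h.2.1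
  have hx₂ := (mem_side_or_mem_side hadj (hsA hx)).resolve_left hx₁
  have hy₁ := (mem_side_or_mem_side hadj (hsA hy)).resolve_right hy₂
  exact h.2.2 (hs.mem_of_mem_side hadj.symm hx hx₂ hy hy₁)
    (hs.mem_of_mem_side hadj hy hy₁ hx hx₂)

end SimpleGraph.IsTree

/-- Read `n, r, a, p` as `N_T, R_T, N_v, R_v`. The three bounds are proved together because
gluing two trees at an edge preserves them jointly but not separately. -/
structure SubtreeBounds (n r a p : ℤ) : Prop where
  one_le : 1 ≤ a
  le_card : a ≤ n
  card_le_sq : n ≤ a ^ 2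
  three_mul_rooted_le : 3 * p ≤ n + a * (a + 1)
  main : 3 * r + (a + 1) * a ≤ (a + 1) * n + 3 * p

namespace SubtreeBounds

theorem singleton : SubtreeBounds 1 1 1 1 := ⟨le_rfl, le_rfl, by norm_num, by norm_num, by norm_num⟩

theorem glue {n₁ r₁ a₁ p₁ n₂ r₂ a₂ p₂ : ℤ} (h₁ : SubtreeBounds n₁ r₁ a₁ p₁)
    (h₂ : SubtreeBounds n₂ r₂ a₂ p₂) :
    SubtreeBounds (n₁ + n₂ + a₁ * a₂) (r₁ + r₂ + (p₁ * a₂ + a₁ * p₂)) (a₁ + a₁ * a₂)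
      (p₁ + (p₁ * a₂ + a₁ * p₂)) := by
  obtain ⟨ha₁, hn₁, hsq₁, hroot₁, hmain₁⟩ := h₁
  obtain ⟨ha₂, hn₂, hsq₂, hroot₂, hmain₂⟩ := h₂
  have h₀ : (0 : ℤ) ≤ a₁ - 1 := by linarith
  have h₀' : (0 : ℤ) ≤ a₂ := by linarith
  refine ⟨by nlinarith, by linarith, ?_, ?_, ?_⟩
  · nlinarith [mul_le_mul_of_nonneg_right hsq₂ (by positivity : (0 : ℤ) ≤ a₁ ^ 2)]
  · linear_combination mul_le_mul_of_nonneg_right hroot₁ (by linarith : (0 : ℤ) ≤ a₂ + 1) +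
      mul_le_mul_of_nonneg_right hroot₂ (by linarith : (0 : ℤ) ≤ a₁) +
      mul_le_mul_of_nonneg_right hsq₁ h₀' + mul_le_mul_of_nonneg_right hsq₂ h₀ +
      sq_nonneg ((a₁ - 1) * a₂)
  · -- the slack is `a₁ a₂ (n₁ - a₁) + (a₁ - 1) (1 + a₂) n₂`
    have hs₁ : 0 ≤ a₁ * a₂ * (n₁ - a₁) := mul_nonneg (by positivity) (by linarith)
    have hs₂ : 0 ≤ (a₁ - 1) * (1 + a₂) * n₂ := mul_nonneg (by positivity) (by linarith)
    linear_combination hmain₁ + hmain₂ + hroot₂ + hs₁ + hs₂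

end SubtreeBounds

open Finset SimpleGraph.IsTree

open Classical in
noncomputable def subtreesIn (G : SimpleGraph V) (A : Finset V) : Finset (Finset V) :=
  A.powerset.filter (IsSubtree G)

section Count

variable {G : SimpleGraph V} {A s : Finset V}

theorem mem_subtreesIn : s ∈ subtreesIn G A ↔ s ⊆ A ∧ IsSubtree G s := by
  classical
  simp [subtreesIn]

theorem subtreesIn_singleton (v : V) : subtreesIn G {v} = {{v}} := by
  ext s
  rw [mem_subtreesIn, Finset.mem_singleton]
  exact ⟨fun ⟨hs, hsub⟩ => (Finset.Nonempty.subset_singleton_iff hsub.1).1 hs,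
    by rintro rfl; exact ⟨subset_rfl, isSubtree_singleton v⟩⟩

variable [DecidableEq V] {hT : G.IsTree} {u v : V}

theorem sum_filter_mem_and_mem_subtreesIn {M : Type*} [AddCommMonoid M] (f : Finset V → M)
    (hA : IsSubtree G A) (hv : v ∈ A) (hu : u ∈ A) (hadj : G.Adj v u) :
    ∑ s ∈ (subtreesIn G A).filter (fun s => v ∈ s ∧ u ∈ s), f s =
      ∑ p ∈ (subtreesIn G (hT.side v u A)).filter (v ∈ ·) ×ˢ
        (subtreesIn G (hT.side u v A)).filter (u ∈ ·), f (p.1 ∪ p.2) := by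
  have hA₁ := isSubtree_side (hT := hT) hA hv hadj.ne
  have hA₂ := isSubtree_side (hT := hT) hA hu hadj.ne'
  refine Finset.sum_nbij' (fun s => (s ∩ hT.side v u A, s ∩ hT.side u v A)) (fun p => p.1 ∪ p.2)
    ?_ ?_ ?_ ?_ ?_
  · simp only [Finset.mem_filter, mem_subtreesIn, Finset.mem_product]
    rintro s ⟨⟨hsA, hs⟩, hvs, hus⟩
    have hv₁ : v ∈ s ∩ hT.side v u A := Finset.mem_inter.2 ⟨hvs, mem_side_self hv hadj.ne⟩
    have hu₂ : u ∈ s ∩ hT.side u v A := Finset.mem_inter.2 ⟨hus, mem_side_self hu hadj.ne'⟩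
    exact ⟨⟨⟨Finset.inter_subset_right, hs.inter hT hA₁ ⟨v, hv₁⟩⟩, hv₁⟩,
      ⟨⟨Finset.inter_subset_right, hs.inter hT hA₂ ⟨u, hu₂⟩⟩, hu₂⟩⟩
  · simp only [Finset.mem_filter, mem_subtreesIn, Finset.mem_product]
    rintro ⟨s, t⟩ ⟨⟨⟨hs₁, hs⟩, hvs⟩, ⟨ht₂, ht⟩, hut⟩
    exact ⟨⟨Finset.union_subset (hs₁.trans side_subset) (ht₂.trans side_subset),
      hs.union_of_adj ht hvs hut hadj⟩, Finset.mem_union_left _ hvs, Finset.mem_union_right _ hut⟩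
  · intro s hs
    exact inter_side_union_inter_side hadj (mem_subtreesIn.1 (Finset.mem_filter.1 hs).1).1
  · simp only [Finset.mem_filter, mem_subtreesIn, Finset.mem_product]
    rintro p ⟨⟨⟨hs₁, -⟩, -⟩, ⟨ht₂, -⟩, -⟩
    have hd := disjoint_side_side (hT := hT) (A := A) hadj
    simp only [Finset.union_inter_distrib_right, Finset.inter_eq_left.2 hs₁,
      Finset.inter_eq_left.2 ht₂, Finset.disjoint_iff_inter_eq_empty.1 (hd.mono_left hs₁),
      Finset.disjoint_iff_inter_eq_empty.1 (hd.mono_right ht₂).symm,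
      Finset.union_empty, Finset.empty_union]
  · intro s hs
    rw [inter_side_union_inter_side hadj (mem_subtreesIn.1 (Finset.mem_filter.1 hs).1).1]

theorem filter_not_mem_and_mem_subtreesIn (hadj : G.Adj v u) :
    (subtreesIn G A).filter (fun s => ¬(v ∈ s ∧ u ∈ s)) =
      subtreesIn G (hT.side v u A) ∪ subtreesIn G (hT.side u v A) := by
  ext s
  simp only [Finset.mem_filter, Finset.mem_union, mem_subtreesIn]
  constructor
  · rintro ⟨⟨hsA, hs⟩, hvu⟩
    rcases hs.subset_side_or hadj hsA with h | h | h
    exacts [Or.inl ⟨h, hs⟩, Or.inr ⟨h, hs⟩, absurd h hvu]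
  · rintro (⟨h, hs⟩ | ⟨h, hs⟩)
    · exact ⟨⟨h.trans side_subset, hs⟩, fun hvu => notMem_side (h hvu.2)⟩
    · exact ⟨⟨h.trans side_subset, hs⟩, fun hvu => notMem_side (h hvu.1)⟩

theorem filter_notMem_filter_mem_subtreesIn (hadj : G.Adj v u) :
    ((subtreesIn G A).filter (v ∈ ·)).filter (u ∉ ·) =
      (subtreesIn G (hT.side v u A)).filter (v ∈ ·) := by
  ext s
  simp only [Finset.mem_filter, mem_subtreesIn]
  constructor
  · rintro ⟨⟨⟨hsA, hs⟩, hvs⟩, hus⟩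
    rcases hs.subset_side_or hadj hsA with h | h | h
    exacts [⟨⟨h, hs⟩, hvs⟩, absurd (h hvs) notMem_side, absurd h.2 hus]
  · rintro ⟨⟨h, hs⟩, hvs⟩
    exact ⟨⟨⟨h.trans side_subset, hs⟩, hvs⟩, fun hus => notMem_side (h hus)⟩

theorem sum_subtreesIn_eq {M : Type*} [AddCommMonoid M] (f : Finset V → M) (hadj : G.Adj v u) :
    ∑ s ∈ subtreesIn G A, f s = ∑ s ∈ subtreesIn G (hT.side v u A), f s +
      ∑ s ∈ subtreesIn G (hT.side u v A), f s +
        ∑ s ∈ (subtreesIn G A).filter (fun s => v ∈ s ∧ u ∈ s), f s := by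
  have hd : Disjoint (subtreesIn G (hT.side v u A)) (subtreesIn G (hT.side u v A)) := by
    refine Finset.disjoint_left.2 fun s h₁ h₂ => ?_
    obtain ⟨z, hz⟩ := (mem_subtreesIn.1 h₁).2.1
    exact Finset.disjoint_left.1 (disjoint_side_side hadj) ((mem_subtreesIn.1 h₁).1 hz)
      ((mem_subtreesIn.1 h₂).1 hz)
  rw [← Finset.sum_filter_not_add_sum_filter _ (fun s => v ∈ s ∧ u ∈ s),
    filter_not_mem_and_mem_subtreesIn (hT := hT) hadj, Finset.sum_union hd]

theorem sum_filter_mem_subtreesIn_eq {M : Type*} [AddCommMonoid M] (f : Finset V → M)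
    (hadj : G.Adj v u) :
    ∑ s ∈ (subtreesIn G A).filter (v ∈ ·), f s =
      ∑ s ∈ (subtreesIn G (hT.side v u A)).filter (v ∈ ·), f s +
        ∑ s ∈ (subtreesIn G A).filter (fun s => v ∈ s ∧ u ∈ s), f s := by
  rw [← Finset.sum_filter_not_add_sum_filter _ (u ∈ ·),
    filter_notMem_filter_mem_subtreesIn (hT := hT) hadj,
    Finset.filter_filter]

theorem card_filter_mem_and_mem_subtreesIn (hA : IsSubtree G A) (hv : v ∈ A) (hu : u ∈ A)
    (hadj : G.Adj v u) :
    #((subtreesIn G A).filter (fun s => v ∈ s ∧ u ∈ s)) =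
      #((subtreesIn G (hT.side v u A)).filter (v ∈ ·)) *
        #((subtreesIn G (hT.side u v A)).filter (u ∈ ·)) := by
  rw [Finset.card_eq_sum_ones, sum_filter_mem_and_mem_subtreesIn (hT := hT) _ hA hv hu hadj,
    ← Finset.card_eq_sum_ones, Finset.card_product]

theorem sum_card_filter_mem_and_mem_subtreesIn (hA : IsSubtree G A) (hv : v ∈ A) (hu : u ∈ A)
    (hadj : G.Adj v u) :
    ∑ s ∈ (subtreesIn G A).filter (fun s => v ∈ s ∧ u ∈ s), #s =
      (∑ s ∈ (subtreesIn G (hT.side v u A)).filter (v ∈ ·), #s) *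
          #((subtreesIn G (hT.side u v A)).filter (u ∈ ·)) +
        #((subtreesIn G (hT.side v u A)).filter (v ∈ ·)) *
          ∑ s ∈ (subtreesIn G (hT.side u v A)).filter (u ∈ ·), #s := by
  rw [sum_filter_mem_and_mem_subtreesIn (hT := hT) _ hA hv hu hadj, Finset.sum_product]
  have hcard : ∀ s ∈ (subtreesIn G (hT.side v u A)).filter (v ∈ ·),
      ∀ t ∈ (subtreesIn G (hT.side u v A)).filter (u ∈ ·), #(s ∪ t) = #s + #t := by
    intro s hs t ht
    exact Finset.card_union_of_disjoint ((disjoint_side_side hadj).mono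
      (mem_subtreesIn.1 (Finset.mem_filter.1 hs).1).1
      (mem_subtreesIn.1 (Finset.mem_filter.1 ht).1).1)
  rw [Finset.sum_congr rfl fun s hs => Finset.sum_congr rfl (hcard s hs)]
  simp only [Finset.sum_add_distrib, Finset.sum_const, smul_eq_mul, ← Finset.mul_sum]
  ring

end Count

theorem IsSubtree.subtreeBounds [DecidableEq V] {G : SimpleGraph V} (hT : G.IsTree)
    {A : Finset V} (hA : IsSubtree G A) {v : V} (hv : v ∈ A) :
    SubtreeBounds #(subtreesIn G A) (∑ s ∈ subtreesIn G A, #s : ℕ)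
      #((subtreesIn G A).filter (v ∈ ·)) (∑ s ∈ (subtreesIn G A).filter (v ∈ ·), #s : ℕ) := by
  induction A using Finset.strongInduction generalizing v with
  | H A ih =>
  by_cases hAv : A = {v}
  · subst hAv
    simpa [subtreesIn_singleton, Finset.filter_singleton] using SubtreeBounds.singleton
  obtain ⟨u, hu, hadj⟩ := hA.exists_adj hv hAv
  have h₁ := ih (hT.side v u A) (side_ssubset hu) (isSubtree_side hA hv hadj.ne)
    (mem_side_self hv hadj.ne)
  have h₂ := ih (hT.side u v A) (side_ssubset hv) (isSubtree_side hA hu hadj.ne')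
    (mem_side_self hu hadj.ne')
  have hN := sum_subtreesIn_eq (hT := hT) (A := A) (fun _ => 1) hadj
  have hNv := sum_filter_mem_subtreesIn_eq (hT := hT) (A := A) (fun _ => 1) hadj
  simp only [← Finset.card_eq_sum_ones] at hN hNv
  rw [hN, hNv, sum_subtreesIn_eq (hT := hT) _ hadj,
    sum_filter_mem_subtreesIn_eq (hT := hT) _ hadj,
    card_filter_mem_and_mem_subtreesIn hA hv hu hadj,
    sum_card_filter_mem_and_mem_subtreesIn hA hv hu hadj]
  exact_mod_cast h₁.glue h₂

theorem SimpleGraph.IsTree.isSubtree_univ [Fintype V] {G : SimpleGraph V} (hT : G.IsTree) :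
    IsSubtree G univ :=
  hT.isSubtree_iff.2 ⟨@univ_nonempty _ _ hT.connected.nonempty, fun _ _ _ _ => subset_univ _⟩

section Fintype

variable [Fintype V] (G : SimpleGraph V)

theorem numSubtrees_eq_card_subtreesIn : numSubtrees G = #(subtreesIn G univ) := by
  simp [numSubtrees, subtreesIn]

theorem sumSubtrees_eq_sum_subtreesIn : sumSubtrees G = ∑ s ∈ subtreesIn G univ, #s := by
  simp [sumSubtrees, subtreesIn]

variable [DecidableEq V] (v : V)

theorem numSubtreesAt_eq_card_filter_subtreesIn :
    numSubtreesAt G v = #((subtreesIn G univ).filter (v ∈ ·)) := by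
  unfold numSubtreesAt
  congr 1
  ext s
  simp [mem_subtreesIn]

theorem sumSubtreesAt_eq_sum_filter_subtreesIn :
    sumSubtreesAt G v = ∑ s ∈ (subtreesIn G univ).filter (v ∈ ·), #s := by
  unfold sumSubtreesAt
  congr 1
  ext s
  simp [mem_subtreesIn]

end Fintype

/-- for any tree `T` and vertex `v`,
`N_v N_T − N_v² + N_T − N_v ≥ 3(R_T − R_v)`. -/
theorem NN_sub_sq_ge_three_mul_R_sub_R
    [Fintype V] (G : SimpleGraph V) (hT : G.IsTree) (v : V) :
    (numSubtreesAt G v : ℤ) * numSubtrees G - (numSubtreesAt G v : ℤ) ^ 2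
        + numSubtrees G - numSubtreesAt G v ≥
      3 * ((sumSubtrees G : ℤ) - sumSubtreesAt G v) := by
  classical
  have h := (hT.isSubtree_univ.subtreeBounds hT (mem_univ v)).main
  rw [numSubtrees_eq_card_subtreesIn, sumSubtrees_eq_sum_subtreesIn,
    numSubtreesAt_eq_card_filter_subtreesIn, sumSubtreesAt_eq_sum_filter_subtreesIn]
  linear_combination h
end

section
/- Let T be a finite tree rooted at a vertex v with deg(v) ≥ 2, such that the rooted tree (T, v) is neither P_{2,2} nor P_{2,3}. Then N_v² + N_v ≥ 3 R_v. -/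
variable {V : Type*}

/-- The rooted tree `(G, v)` is `P_{2,2}`: the star on 3 vertices rooted at its center. -/
def IsP22 [Fintype V] [DecidableEq V] (G : SimpleGraph V) [DecidableRel G.Adj] (v : V) : Prop :=
  Fintype.card V = 3 ∧ G.degree v = 2

/-- The rooted tree `(G, v)` is `P_{2,3}`: the path on 4 vertices rooted at an
internal vertex. -/
def IsP23 [Fintype V] [DecidableEq V] (G : SimpleGraph V) [DecidableRel G.Adj] (v : V) : Prop :=
  Fintype.card V = 4 ∧ G.degree v = 2 ∧ ∀ w : V, G.degree w ≤ 2

/-!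
Deleting an edge `vw` of the tree splits it into the side `B` of `v` and the side `A` of `w`. A
subtree containing `v` is a subtree of `B` containing `v`, possibly glued along `vw` to a subtree
of `A` containing `w`. So if the two rooted families have `n` and `m` members of total orders
`R_B` and `R_A`, then `N_v = n (m + 1)` and `R_v = (m + 1) R_B + n R_A`.

In any family of subtrees through a fixed root, a member `s` contains at least `|s|` members of
the family (peel off leaves other than the root one at a time), so counting comparable pairs gives
`2 R ≤ N² + N`. Substituting, `2 (N_v² + N_v - 3 R_v) ≥ n (m + 1) (2 n m - n - 3 m - 1)`, which is
nonnegative unless `(n, m)` is `(2, 1)`, `(2, 2)` or `(3, 1)`. As `n ≥ 2 ^ (deg v - 1)` and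
`|T| ≤ n + m`, these cases force `deg v = 2` and `|T| ≤ 4`, that is `P_{2,2}` or `P_{2,3}`.
-/

namespace SimpleGraph

variable {G : SimpleGraph V}

lemma exists_isPath_support_subset_of_connected_induce {s : Set V}
    (hs : (G.induce s).Connected) {a b : V} (ha : a ∈ s) (hb : b ∈ s) :
    ∃ p : G.Walk a b, p.IsPath ∧ ∀ x ∈ p.support, x ∈ s := by
  classical
  obtain ⟨q⟩ := hs.preconnected ⟨a, ha⟩ ⟨b, hb⟩
  refine ⟨(q.map (Embedding.induce s).toHom).bypass, Walk.bypass_isPath _, fun x hx => ?_⟩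
  obtain ⟨y, -, rfl⟩ := List.mem_map.mp <|
    (Walk.support_map _ q) ▸ Walk.support_bypass_subset_support _ hx
  exact y.2

lemma IsAcyclic.connected_induce_inter_reachable (hG : G.IsAcyclic) {H : SimpleGraph V}
    (hH : H ≤ G) {s : Set V} (hs : (G.induce s).Connected) {x : V} (hx : x ∈ s) :
    (G.induce (s ∩ {u | H.Reachable x u})).Connected := by
  classical
  rw [connected_iff_exists_forall_reachable]
  refine ⟨⟨x, hx, Reachable.refl x⟩, ?_⟩
  rintro ⟨u, hus, hxu⟩
  obtain ⟨p, hp, hps⟩ := exists_isPath_support_subset_of_connected_induce hs hx hus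
  obtain ⟨q, hq⟩ := hxu.exists_isPath
  have hqp : q.mapLe hH = p :=
    congrArg Subtype.val ((hG.subsingleton_path x u).elim ⟨_, hq.mapLe hH⟩ ⟨p, hp⟩)
  refine ⟨(q.mapLe hH).induce (s ∩ {u | H.Reachable x u}) fun y hy => ⟨hps y (hqp ▸ hy), ?_⟩⟩
  rw [Walk.support_mapLe_eq_support] at hy
  exact ⟨q.takeUntil y hy⟩

lemma mem_of_connected_induce_of_not_reachable_deleteEdges {s : Set V}
    (hs : (G.induce s).Connected) {a b v w : V} (ha : a ∈ s) (hb : b ∈ s)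
    (hab : ¬ (G.deleteEdges {s(v, w)}).Reachable a b) : w ∈ s := by
  obtain ⟨p, -, hps⟩ := exists_isPath_support_subset_of_connected_induce hs ha hb
  have hvw : s(v, w) ∈ p.edges := by
    by_contra h
    exact hab ⟨p.toDeleteEdges _ fun e he hev => h (Set.mem_singleton_iff.mp hev ▸ he)⟩
  exact hps w (p.snd_mem_support_of_mem_edges hvw)

lemma deleteEdges_singleton_swap {v w : V} :
    G.deleteEdges {s(w, v)} = G.deleteEdges {s(v, w)} := by
  rw [Sym2.eq_swap]

end SimpleGraph

open Finset SimpleGraph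

section Sides

variable [Fintype V] {G : SimpleGraph V} {v w : V}

open Classical in
noncomputable def sideOf (G : SimpleGraph V) (v w : V) : Finset V :=
  univ.filter fun u => (G.deleteEdges {s(v, w)}).Reachable v u

lemma mem_sideOf {u : V} : u ∈ sideOf G v w ↔ (G.deleteEdges {s(v, w)}).Reachable v u := by
  simp [sideOf]

lemma self_mem_sideOf : v ∈ sideOf G v w := mem_sideOf.mpr (Reachable.refl v)

lemma mem_sideOf_or_mem_sideOf (hG : G.Connected) (u : V) :
    u ∈ sideOf G v w ∨ u ∈ sideOf G w v := by
  simp only [mem_sideOf, deleteEdges_singleton_swap]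
  obtain ⟨p⟩ := hG.preconnected u v
  suffices ∀ {a b : V}, G.Walk a b → b = v → (G.deleteEdges {s(v, w)}).Reachable v a ∨
      (G.deleteEdges {s(v, w)}).Reachable w a from this p rfl
  intro a b p hb
  induction p with
  | nil => exact Or.inl (hb ▸ Reachable.refl _)
  | @cons u u' _ hadj _ ih =>
    specialize ih hb
    by_cases he : s(u, u') = s(v, w)
    · rcases Sym2.eq_iff.mp he with ⟨rfl, -⟩ | ⟨rfl, -⟩
      · exact Or.inl (Reachable.refl _)
      · exact Or.inr (Reachable.refl _)
    · have h : (G.deleteEdges {s(v, w)}).Adj u' u := by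
        simpa [deleteEdges_adj, Sym2.eq_swap, he] using hadj.symm
      exact ih.imp (·.trans h.reachable) (·.trans h.reachable)

lemma sideOf_swap_eq_compl [DecidableEq V] (hG : G.IsTree) (hvw : G.Adj v w) :
    sideOf G w v = (sideOf G v w)ᶜ := by
  ext u
  rw [mem_compl]
  refine ⟨fun hw hv => ?_, (mem_sideOf_or_mem_sideOf hG.connected u).resolve_left⟩
  rw [mem_sideOf, deleteEdges_singleton_swap] at hw
  exact isAcyclic_iff_forall_adj_isBridge.mp hG.isAcyclic hvw
    ((mem_sideOf.mp hv).trans hw.symm)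

end Sides

lemma Finset.two_mul_sum_card_filter_le_le {α : Type*} [PartialOrder α] [DecidableLE α]
    (F : Finset α) : 2 * ∑ s ∈ F, #(F.filter (· ≤ s)) ≤ #F ^ 2 + #F := by
  classical
  calc 2 * ∑ s ∈ F, #(F.filter (· ≤ s))
      = ∑ s ∈ F, ∑ a ∈ F, ((if a ≤ s then 1 else 0) + (if s ≤ a then 1 else 0)) := by
        simp only [card_filter, sum_add_distrib, two_mul]
        rw [sum_comm (f := fun s a => if s ≤ a then 1 else 0)]
    _ ≤ ∑ s ∈ F, ∑ a ∈ F, (1 + if a = s then 1 else 0) := by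
        refine sum_le_sum fun s _ => sum_le_sum fun a _ => ?_
        by_cases has : a = s
        · simp [has]
        · have := fun h₁ h₂ => has (le_antisymm h₁ h₂)
          split_ifs <;> simp_all
    _ = #F ^ 2 + #F := by
        rw [sum_congr rfl fun s hs => by rw [sum_add_distrib, sum_ite_eq' F s, if_pos hs]]
        simp only [sum_const, smul_eq_mul]
        ring

section RootedSubtrees

variable [Fintype V] {G : SimpleGraph V} {r : V} {C s : Finset V}

open Classical in
noncomputable def rootedSubtrees (G : SimpleGraph V) (r : V) (C : Finset V) : Finset (Finset V) :=
  univ.filter fun s => IsSubtree G s ∧ r ∈ s ∧ s ⊆ C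

lemma mem_rootedSubtrees : s ∈ rootedSubtrees G r C ↔ IsSubtree G s ∧ r ∈ s ∧ s ⊆ C := by
  simp [rootedSubtrees]

lemma empty_notMem_rootedSubtrees : ∅ ∉ rootedSubtrees G r C :=
  fun h => notMem_empty r (mem_rootedSubtrees.mp h).2.1

lemma numSubtreesAt_eq_card_rootedSubtrees : numSubtreesAt G r = #(rootedSubtrees G r univ) := by
  rw [numSubtreesAt, rootedSubtrees]
  congr 1
  ext s
  simp

lemma sumSubtreesAt_eq_sum_rootedSubtrees :
    sumSubtreesAt G r = ∑ s ∈ rootedSubtrees G r univ, #s := by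
  rw [sumSubtreesAt, rootedSubtrees]
  exact sum_congr (by ext s; simp) fun _ _ => rfl

lemma exists_connected_induce_erase [DecidableEq V] (hs : (G.induce (s : Set V)).Connected)
    (hr : r ∈ s) (hsr : s ≠ {r}) :
    ∃ x ∈ s, x ≠ r ∧ (G.induce (s.erase x : Set V)).Connected := by
  classical
  -- `x` is a leaf of a spanning tree of `G[s]`; of the two leaves of a nontrivial tree, one is
  -- not `r`.
  obtain ⟨T, hTle, hT⟩ := hs.exists_isTree_le
  obtain ⟨y, hys, hyr⟩ : ∃ y ∈ s, y ≠ r := by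
    by_contra! h
    exact hsr (eq_singleton_iff_unique_mem.mpr ⟨hr, h⟩)
  have : Nontrivial (s : Set V) := ⟨⟨r, hr⟩, ⟨y, hys⟩, fun h => hyr (congrArg Subtype.val h).symm⟩
  obtain ⟨a, b, hab, ha, hb⟩ := hT.exists_ne_and_degree_eq_one
  obtain ⟨x, hxr, hx⟩ : ∃ x : (s : Set V), x ≠ ⟨r, hr⟩ ∧ T.degree x = 1 := by
    by_cases har : a = ⟨r, hr⟩
    · exact ⟨b, har ▸ hab.symm, hb⟩
    · exact ⟨a, har, ha⟩
  refine ⟨x, x.2, fun h => hxr (Subtype.ext h), ?_⟩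
  let f : T.induce {x}ᶜ →g G.induce (s.erase x : Set V) :=
    ⟨fun z => ⟨z.1.1, mem_erase.mpr ⟨fun h => z.2 (Subtype.ext h), z.1.2⟩⟩, fun hadj => hTle hadj⟩
  refine (hT.connected.induce_compl_singleton_of_degree_eq_one hx).map f ?_
  rintro ⟨u, hu⟩
  obtain ⟨hux, hus⟩ := mem_erase.mp hu
  exact ⟨⟨⟨u, hus⟩, fun h => hux (congrArg Subtype.val h)⟩, rfl⟩

lemma card_le_card_filter_subset [DecidableEq V] (hs : s ∈ rootedSubtrees G r C) :
    #s ≤ #((rootedSubtrees G r C).filter (· ⊆ s)) := by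
  induction s using Finset.strongInduction with
  | H s ih =>
    obtain ⟨hsub, hr, hsC⟩ := mem_rootedSubtrees.mp hs
    have hs_mem : s ∈ (rootedSubtrees G r C).filter (· ⊆ s) := mem_filter.mpr ⟨hs, subset_rfl⟩
    by_cases hsr : s = {r}
    · subst hsr
      exact card_pos.mpr ⟨_, hs_mem⟩
    obtain ⟨x, hxs, hxr, hconn⟩ := exists_connected_induce_erase hsub.2 hr hsr
    have hs' : s.erase x ∈ rootedSubtrees G r C := mem_rootedSubtrees.mpr
      ⟨⟨⟨r, mem_erase.mpr ⟨hxr.symm, hr⟩⟩, hconn⟩, mem_erase.mpr ⟨hxr.symm, hr⟩,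
        (erase_subset x s).trans hsC⟩
    have hlt : (rootedSubtrees G r C).filter (· ⊆ s.erase x) ⊂
        (rootedSubtrees G r C).filter (· ⊆ s) := by
      refine (ssubset_iff_of_subset fun a ha => ?_).mpr ⟨s, hs_mem, fun h => ?_⟩
      · rw [mem_filter] at ha ⊢
        exact ⟨ha.1, ha.2.trans (erase_subset x s)⟩
      · exact notMem_erase x s ((mem_filter.mp h).2 hxs)
    calc #s = #(s.erase x) + 1 := (card_erase_add_one hxs).symm
      _ ≤ #((rootedSubtrees G r C).filter (· ⊆ s.erase x)) + 1 :=
        Nat.add_le_add_right (ih _ (erase_ssubset hxs) hs') 1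
      _ ≤ #((rootedSubtrees G r C).filter (· ⊆ s)) := card_lt_card hlt

lemma card_le_card_rootedSubtrees [DecidableEq V] (hC : IsSubtree G C) (hr : r ∈ C) :
    #C ≤ #(rootedSubtrees G r C) :=
  (card_le_card_filter_subset (mem_rootedSubtrees.mpr ⟨hC, hr, subset_rfl⟩)).trans
    (card_filter_le _ _)

lemma two_mul_sum_card_rootedSubtrees_le [DecidableEq V] :
    2 * ∑ s ∈ rootedSubtrees G r C, #s ≤ #(rootedSubtrees G r C) ^ 2 + #(rootedSubtrees G r C) :=
  le_trans (Nat.mul_le_mul_left 2 (sum_le_sum fun _ hs => card_le_card_filter_subset hs))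
    (two_mul_sum_card_filter_le_le _)

lemma two_pow_card_le_card_rootedSubtrees [DecidableEq V] {S : Finset V} (hr : r ∈ C)
    (hSC : S ⊆ C) (hS : ∀ x ∈ S, G.Adj r x) : 2 ^ #S ≤ #(rootedSubtrees G r C) := by
  have hrS : r ∉ S := fun h => G.irrefl (hS r h)
  rw [← card_powerset]
  refine card_le_card_of_injOn (insert r) (fun T hT => ?_) (fun T₁ hT₁ T₂ hT₂ h => ?_)
  · have hTS : T ⊆ S := mem_powerset.mp hT
    refine mem_rootedSubtrees.mpr ⟨⟨insert_nonempty r T, ?_⟩, mem_insert_self r T,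
      insert_subset hr (hTS.trans hSC)⟩
    refine induce_connected_of_patches r (mem_insert_self r T) fun {u} hu => ?_
    refine ⟨_, subset_rfl, mem_insert_self r T, hu, ?_⟩
    rcases mem_insert.mp hu with rfl | huT
    · rfl
    · exact Adj.reachable (G := G.induce _) (hS u (hTS huT))
  · have h₁ : r ∉ T₁ := fun h => hrS (mem_powerset.mp hT₁ h)
    have h₂ : r ∉ T₂ := fun h => hrS (mem_powerset.mp hT₂ h)
    rw [← erase_insert h₁, ← erase_insert h₂]
    exact congrArg (·.erase r) h

end RootedSubtrees

section BranchDecomposition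

variable [Fintype V] [DecidableEq V] {G : SimpleGraph V} {v w : V} {s : Finset V}

lemma inter_sideOf_mem_rootedSubtrees (hG : G.IsAcyclic) (hs : IsSubtree G s) (hv : v ∈ s) :
    s ∩ sideOf G v w ∈ rootedSubtrees G v (sideOf G v w) := by
  have hcoe : ((s ∩ sideOf G v w : Finset V) : Set V) =
      (s : Set V) ∩ {u | (G.deleteEdges {s(v, w)}).Reachable v u} := by
    ext u
    simp [mem_sideOf]
  refine mem_rootedSubtrees.mpr ⟨⟨⟨v, mem_inter.mpr ⟨hv, self_mem_sideOf⟩⟩, ?_⟩,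
    mem_inter.mpr ⟨hv, self_mem_sideOf⟩, inter_subset_right⟩
  rw [hcoe]
  exact hG.connected_induce_inter_reachable (deleteEdges_le _) hs.2 hv

lemma mem_of_inter_sideOf_swap_nonempty (hG : G.IsTree) (hvw : G.Adj v w) (hs : IsSubtree G s)
    (hv : v ∈ s) (hne : (s ∩ sideOf G w v).Nonempty) : w ∈ s := by
  obtain ⟨u, hu⟩ := hne
  obtain ⟨hus, huw⟩ := mem_inter.mp hu
  refine mem_of_connected_induce_of_not_reachable_deleteEdges (v := v) hs.2 hv hus fun h => ?_
  rw [sideOf_swap_eq_compl hG hvw, mem_compl] at huw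
  exact huw (mem_sideOf.mpr h)

lemma isSubtree_union_of_adj (hvw : G.Adj v w) {P Q X Y : Finset V}
    (hP : P ∈ rootedSubtrees G v X) (hQ : Q ∈ rootedSubtrees G w Y) : IsSubtree G (P ∪ Q) := by
  obtain ⟨⟨-, hPc⟩, hvP, -⟩ := mem_rootedSubtrees.mp hP
  obtain ⟨⟨-, hQc⟩, hwQ, -⟩ := mem_rootedSubtrees.mp hQ
  refine ⟨⟨v, mem_union_left Q hvP⟩, ?_⟩
  rw [coe_union]
  exact connected_induce_union hPc.preconnected hQc.preconnected hvP hwQ hvw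

lemma sum_rootedSubtrees_univ_eq {M : Type*} [AddCommMonoid M] (hG : G.IsTree)
    (hvw : G.Adj v w) (f : Finset V → M) :
    ∑ s ∈ rootedSubtrees G v univ, f s =
      ∑ p ∈ rootedSubtrees G v (sideOf G v w) ×ˢ insert ∅ (rootedSubtrees G w (sideOf G w v)),
        f (p.1 ∪ p.2) := by
  have hA := sideOf_swap_eq_compl hG hvw
  have hsplit : ∀ s : Finset V, s ∩ sideOf G v w ∪ s ∩ sideOf G w v = s := fun s => by
    rw [hA, ← inter_union_distrib_left, union_compl, inter_univ]
  refine sum_nbij' (fun s => (s ∩ sideOf G v w, s ∩ sideOf G w v)) (fun p => p.1 ∪ p.2)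
    (fun s hs => ?_) (fun p hp => ?_) (fun s _ => hsplit s) (fun p hp => ?_)
    (fun s _ => by rw [hsplit])
  · obtain ⟨hsub, hv, -⟩ := mem_rootedSubtrees.mp hs
    refine mem_product.mpr ⟨inter_sideOf_mem_rootedSubtrees hG.isAcyclic hsub hv, ?_⟩
    rcases (s ∩ sideOf G w v).eq_empty_or_nonempty with h | h
    · exact h ▸ mem_insert_self _ _
    · exact mem_insert_of_mem (inter_sideOf_mem_rootedSubtrees hG.isAcyclic hsub
        (mem_of_inter_sideOf_swap_nonempty hG hvw hsub hv h))
  · obtain ⟨hP, hQ⟩ := mem_product.mp hp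
    have hvP := (mem_rootedSubtrees.mp hP).2.1
    refine mem_rootedSubtrees.mpr ⟨?_, mem_union_left _ hvP, subset_univ _⟩
    rcases mem_insert.mp hQ with h | h
    · exact h ▸ (union_empty p.1).symm ▸ (mem_rootedSubtrees.mp hP).1
    · exact isSubtree_union_of_adj hvw hP h
  · obtain ⟨hP, hQ⟩ := mem_product.mp hp
    have h₁ := (mem_rootedSubtrees.mp hP).2.2
    have h₂ : p.2 ⊆ (sideOf G v w)ᶜ := by
      rcases mem_insert.mp hQ with h | h
      · exact h ▸ empty_subset _
      · exact hA ▸ (mem_rootedSubtrees.mp h).2.2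
    rw [hA]
    ext1 <;> grind [mem_compl]

lemma card_rootedSubtrees_univ_eq (hG : G.IsTree) (hvw : G.Adj v w) :
    #(rootedSubtrees G v univ) =
      #(rootedSubtrees G v (sideOf G v w)) * (#(rootedSubtrees G w (sideOf G w v)) + 1) := by
  rw [card_eq_sum_ones, sum_rootedSubtrees_univ_eq hG hvw, sum_const, smul_eq_mul, mul_one,
    card_product, card_insert_of_notMem empty_notMem_rootedSubtrees]

lemma sum_card_rootedSubtrees_univ_eq (hG : G.IsTree) (hvw : G.Adj v w) :
    ∑ s ∈ rootedSubtrees G v univ, #s =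
      (#(rootedSubtrees G w (sideOf G w v)) + 1) * ∑ s ∈ rootedSubtrees G v (sideOf G v w), #s +
        #(rootedSubtrees G v (sideOf G v w)) * ∑ s ∈ rootedSubtrees G w (sideOf G w v), #s := by
  have hdisj : Disjoint (sideOf G v w) (sideOf G w v) :=
    sideOf_swap_eq_compl hG hvw ▸ disjoint_compl_right
  have hinner : ∀ P ∈ rootedSubtrees G v (sideOf G v w),
      ∑ Q ∈ insert ∅ (rootedSubtrees G w (sideOf G w v)), #(P ∪ Q) =
        (#(rootedSubtrees G w (sideOf G w v)) + 1) * #P +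
          ∑ Q ∈ rootedSubtrees G w (sideOf G w v), #Q := by
    intro P hP
    rw [sum_insert empty_notMem_rootedSubtrees, union_empty,
      sum_congr rfl fun Q hQ => card_union_of_disjoint (hdisj.mono
        (mem_rootedSubtrees.mp hP).2.2 (mem_rootedSubtrees.mp hQ).2.2),
      sum_add_distrib, sum_const, smul_eq_mul]
    ring
  rw [sum_rootedSubtrees_univ_eq hG hvw, sum_product, sum_congr rfl hinner, sum_add_distrib,
    ← mul_sum, sum_const, smul_eq_mul]

lemma isSubtree_sideOf (hG : G.IsTree) : IsSubtree G (sideOf G v w) := by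
  have huniv : IsSubtree G univ :=
    ⟨univ_nonempty_iff.mpr hG.connected.nonempty,
      coe_univ (α := V) ▸ (G.induceUnivIso.connected_iff).mpr hG.connected⟩
  simpa using (mem_rootedSubtrees.mp
    (inter_sideOf_mem_rootedSubtrees (w := w) hG.isAcyclic huniv (mem_univ v))).1

lemma card_le_card_add_card_rootedSubtrees_sideOf (hG : G.IsTree) (hvw : G.Adj v w) :
    Fintype.card V ≤
      #(rootedSubtrees G v (sideOf G v w)) + #(rootedSubtrees G w (sideOf G w v)) := by
  have hB := card_le_card_rootedSubtrees (isSubtree_sideOf hG) (self_mem_sideOf (v := v) (w := w))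
  have hA := card_le_card_rootedSubtrees (isSubtree_sideOf hG) (self_mem_sideOf (v := w) (w := v))
  have hcompl := card_compl (sideOf G v w)
  rw [← sideOf_swap_eq_compl hG hvw] at hcompl
  have := card_le_univ (sideOf G v w)
  omega

lemma two_pow_degree_sub_one_le_card_rootedSubtrees_sideOf [DecidableRel G.Adj]
    (hvw : G.Adj v w) : 2 ^ (G.degree v - 1) ≤ #(rootedSubtrees G v (sideOf G v w)) := by
  have hS : ∀ x ∈ (G.neighborFinset v).erase w, G.Adj v x := fun x hx =>
    (mem_neighborFinset _ _ _).mp (mem_of_mem_erase hx)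
  have hSside : (G.neighborFinset v).erase w ⊆ sideOf G v w := fun x hx => by
    refine mem_sideOf.mpr (Adj.reachable (deleteEdges_adj.mpr ⟨hS x hx, fun h => ?_⟩))
    exact ne_of_mem_erase hx (Sym2.congr_right.mp (Set.mem_singleton_iff.mp h))
  have := two_pow_card_le_card_rootedSubtrees self_mem_sideOf hSside hS
  rwa [card_erase_of_mem ((mem_neighborFinset _ _ _).mpr hvw), card_neighborFinset_eq_degree]
    at this

end BranchDecomposition

lemma SimpleGraph.IsTree.degree_add_degree_le_card [Fintype V] {G : SimpleGraph V}
    [DecidableRel G.Adj] (hG : G.IsTree) {v z : V} (hvz : v ≠ z) :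
    G.degree v + G.degree z ≤ Fintype.card V := by
  classical
  have : Nontrivial V := ⟨v, z, hvz⟩
  have hpos : ∀ u, 1 ≤ G.degree u := fun u => hG.connected.preconnected.degree_pos_of_nontrivial u
  have hsum : ∑ u, (G.degree u - 1) + Fintype.card V = 2 * #G.edgeFinset := by
    rw [← sum_degrees_eq_twice_card_edges, ← card_univ, card_eq_sum_ones, ← sum_add_distrib]
    exact sum_congr rfl fun u _ => Nat.sub_add_cancel (hpos u)
  have hpair : (G.degree v - 1) + (G.degree z - 1) ≤ ∑ u, (G.degree u - 1) := by
    rw [← sum_pair hvz (f := fun u => G.degree u - 1)]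
    exact sum_le_sum_of_subset (subset_univ _)
  have := hG.card_edgeFinset
  have := hpos v
  have := hpos z
  omega

lemma SimpleGraph.IsTree.three_le_degree_or_five_le_card [Fintype V] [DecidableEq V]
    {G : SimpleGraph V} [DecidableRel G.Adj] (hG : G.IsTree) {v : V} (hdeg : 2 ≤ G.degree v)
    (h22 : ¬ IsP22 G v) (h23 : ¬ IsP23 G v) : 3 ≤ G.degree v ∨ 5 ≤ Fintype.card V := by
  by_contra! h
  have hv : G.degree v = 2 := by omega
  have := G.degree_lt_card_verts v
  rcases (show Fintype.card V = 3 ∨ Fintype.card V = 4 by omega) with h3 | h4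
  · exact h22 ⟨h3, hv⟩
  · refine h23 ⟨h4, hv, fun z => ?_⟩
    rcases eq_or_ne v z with rfl | hvz
    · exact hv.le
    · have := hG.degree_add_degree_le_card hvz
      omega

lemma Nat.add_three_mul_add_one_le_two_mul_mul {n m : ℕ} (hn : 2 ≤ n) (hm : 1 ≤ m)
    (h : 4 ≤ n ∨ 5 ≤ n + m) : n + 3 * m + 1 ≤ 2 * n * m := by
  rcases h with h | h
  · nlinarith
  · rcases (show n = 2 ∨ 3 ≤ n by omega) with rfl | h3
    · omega
    · rcases (show m = 1 ∨ 2 ≤ m by omega) with rfl | h2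
      · omega
      · nlinarith

lemma Nat.three_mul_le_sq_add_of_two_mul_le {n m R S : ℕ} (hR : 2 * R ≤ n ^ 2 + n)
    (hS : 2 * S ≤ m ^ 2 + m) (hnm : n + 3 * m + 1 ≤ 2 * n * m) :
    3 * ((m + 1) * R + n * S) ≤ (n * (m + 1)) ^ 2 + n * (m + 1) := by
  nlinarith [Nat.mul_le_mul_left (n * (m + 1)) hnm, Nat.mul_le_mul_left (3 * (m + 1)) hR,
    Nat.mul_le_mul_left (3 * n) hS]

/-- for a tree rooted at `v` with `deg(v) ≥ 2` which is neither `P_{2,2}`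
nor `P_{2,3}`, one has `N_v² + N_v ≥ 3 R_v`. -/
theorem Nv_sq_add_Nv_ge_three_Rv
    [Fintype V] [DecidableEq V] (G : SimpleGraph V) [DecidableRel G.Adj]
    (hT : G.IsTree) (v : V) (hdeg : 2 ≤ G.degree v)
    (h22 : ¬ IsP22 G v) (h23 : ¬ IsP23 G v) :
    numSubtreesAt G v ^ 2 + numSubtreesAt G v ≥ 3 * sumSubtreesAt G v := by
  obtain ⟨w, hvw⟩ := (G.degree_pos_iff_exists_adj v).mp (by omega)
  have hn := two_pow_degree_sub_one_le_card_rootedSubtrees_sideOf hvw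
  have hm : 1 ≤ #(rootedSubtrees G w (sideOf G w v)) :=
    card_pos.mpr ⟨_, mem_rootedSubtrees.mpr ⟨isSubtree_sideOf hT, self_mem_sideOf, subset_rfl⟩⟩
  have hcard := card_le_card_add_card_rootedSubtrees_sideOf hT hvw
  have hpow : ∀ k, k ≤ G.degree v - 1 → 2 ^ k ≤ #(rootedSubtrees G v (sideOf G v w)) :=
    fun k hk => (Nat.pow_le_pow_right two_pos hk).trans hn
  have hnm := Nat.add_three_mul_add_one_le_two_mul_mul (hpow 1 (by omega)) hm <|
    (hT.three_le_degree_or_five_le_card hdeg h22 h23).imp (fun h => hpow 2 (by omega))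
      fun h => h.trans hcard
  rw [ge_iff_le, numSubtreesAt_eq_card_rootedSubtrees, sumSubtreesAt_eq_sum_rootedSubtrees,
    card_rootedSubtrees_univ_eq hT hvw, sum_card_rootedSubtrees_univ_eq hT hvw]
  exact Nat.three_mul_le_sq_add_of_two_mul_le two_mul_sum_card_rootedSubtrees_le
    two_mul_sum_card_rootedSubtrees_le hnm
end
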